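/- For every k ≥ n, R*(k+n) ≤ R*(k): given an optimal walk with k visits, inserting immediately after a binding subwalk a shortcut of that binding subwalk with exactly n visits (retaining the last visit to each target) yields a feasible walk with k+n visits whose revisit time equals R*(k). -/

import Mathlib

/-!
Every walk `W` with `k` visits has a gap `(P, Q)` of some target `d` with travel time `R(W)`. It
is binding: a target missed on `(P, Q]` would have a gap strictly containing `[P, Q]`, longer
than `R(W)`. The new walk inserts, right after `Q`, the last visits in `(P, Q]` in their order.
A gap of the new walk either reads a stretch of `W` free of its target, which costs at most `R(W)`
by the triangle inequality, or runs from the last visit before the inserted block into the block;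
then it is bounded by `W` from that visit to `Q` plus the shortcut from `P` (also a visit to `d`)
to it, i.e. by the travel time of `(P, Q)`.

For `n = 2` and odd `k` there is no walk at all, and both sides are `sInf ∅ = 0`.
-/

/-- A closed walk with `k` visits on `n` targets, modeled as a `k`-periodic
sequence of targets in which consecutive visits are distinct and every
target is visited at least once in each period. -/
structure CWalk (n k : ℕ) where
  seq : ℕ → Fin n
  periodic : ∀ i, seq (i + k) = seq i
  step : ∀ i, seq i ≠ seq (i + 1)
  covers : ∀ d : Fin n, ∃ i < k, seq i = d

namespace CWalk

/-- Travel time from the `i`-th to the `j`-th visit. -/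
noncomputable def tt {n k : ℕ} (c : Fin n → Fin n → ℝ) (W : CWalk n k) (i j : ℕ) : ℝ :=
  ∑ t ∈ Finset.Ico i j, c (W.seq t) (W.seq (t + 1))

/-- Duration of one period of the walk. -/
noncomputable def duration {n k : ℕ} (c : Fin n → Fin n → ℝ) (W : CWalk n k) : ℝ :=
  W.tt c 0 k

/-- Revisit time of target `d`: the maximum time between consecutive visits to `d`. -/
noncomputable def RT {n k : ℕ} (c : Fin n → Fin n → ℝ) (W : CWalk n k) (d : Fin n) : ℝ :=
  sSup {T : ℝ | ∃ i j : ℕ, i < j ∧ W.seq i = d ∧ W.seq j = d ∧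
    (∀ t, i < t → t < j → W.seq t ≠ d) ∧ T = W.tt c i j}

/-- Revisit time of the walk: maximum revisit time over all targets. -/
noncomputable def R {n k : ℕ} (c : Fin n → Fin n → ℝ) (W : CWalk n k) : ℝ :=
  sSup {T : ℝ | ∃ d : Fin n, T = W.RT c d}

end CWalk

/-- Optimal revisit time over all closed walks with `k` visits. -/
noncomputable def Rstar (n : ℕ) (c : Fin n → Fin n → ℝ) (k : ℕ) : ℝ :=
  sInf {T : ℝ | ∃ W : CWalk n k, T = W.R c}

/-- Optimal TSP tour length: minimal duration of a closed walk with `n` visits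
(each target is then visited exactly once). -/
noncomputable def TSPstar (n : ℕ) (c : Fin n → Fin n → ℝ) : ℝ :=
  sInf {T : ℝ | ∃ W : CWalk n n, T = W.duration c}

namespace CWalk

section Basic

variable {n k : ℕ} (c : Fin n → Fin n → ℝ) (W : CWalk n k)

lemma period_pos (W : CWalk n k) : 0 < k := by
  obtain ⟨i, hi, -⟩ := W.covers (W.seq 0)
  omega

lemma seq_add_mul (i m : ℕ) : W.seq (i + m * k) = W.seq i := by
  induction m with
  | zero => simp
  | succ m ih => rw [Nat.succ_mul, ← Nat.add_assoc, W.periodic, ih]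

lemma exists_visit_mem_Ico (m : ℕ) (e : Fin n) : ∃ t, m ≤ t ∧ t < m + k ∧ W.seq t = e := by
  obtain ⟨t₀, ht₀, rfl⟩ := W.covers e
  set q := (m + k - 1 - t₀) / k
  have hq : q * k + (m + k - 1 - t₀) % k = m + k - 1 - t₀ := Nat.div_add_mod' _ _
  have := Nat.mod_lt (m + k - 1 - t₀) W.period_pos
  exact ⟨t₀ + q * k, by omega, by omega, W.seq_add_mul _ _⟩

lemma tt_self (i : ℕ) : W.tt c i i = 0 := by simp [tt]

lemma tt_succ {i j : ℕ} (h : i ≤ j) :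
    W.tt c i (j + 1) = W.tt c i j + c (W.seq j) (W.seq (j + 1)) :=
  Finset.sum_Ico_succ_top h _

lemma tt_add {i j l : ℕ} (h₁ : i ≤ j) (h₂ : j ≤ l) :
    W.tt c i l = W.tt c i j + W.tt c j l :=
  (Finset.sum_Ico_consecutive _ h₁ h₂).symm

lemma tt_add_mul (i j m : ℕ) : W.tt c (i + m * k) (j + m * k) = W.tt c i j := by
  simp only [tt, ← Finset.sum_Ico_add', add_right_comm _ (m * k) 1, seq_add_mul]

lemma tt_add_period (i j : ℕ) : W.tt c (i + k) (j + k) = W.tt c i j := by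
  simpa using W.tt_add_mul c i j 1

variable {c}

lemma tt_nonneg (hc : ∀ u v, u ≠ v → 0 ≤ c u v) (i j : ℕ) : 0 ≤ W.tt c i j :=
  Finset.sum_nonneg fun t _ => hc _ _ (W.step t)

lemma tt_mono (hc : ∀ u v, u ≠ v → 0 ≤ c u v) {i i' j j' : ℕ} (hi : i' ≤ i) (hj : j ≤ j') :
    W.tt c i j ≤ W.tt c i' j' :=
  Finset.sum_le_sum_of_subset_of_nonneg (Finset.Ico_subset_Ico hi hj)
    fun t _ _ => hc _ _ (W.step t)

lemma tt_pos (hc : ∀ u v, u ≠ v → 0 < c u v) {i j : ℕ} (h : i < j) : 0 < W.tt c i j :=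
  Finset.sum_pos (fun t _ => hc _ _ (W.step t)) ⟨i, Finset.mem_Ico.2 ⟨le_rfl, h⟩⟩

lemma c_le_tt (htri : ∀ u v w, c u w ≤ c u v + c v w) {i j : ℕ} (h : i < j) :
    c (W.seq i) (W.seq j) ≤ W.tt c i j := by
  induction j, h using Nat.le_induction with
  | base => simp [tt]
  | succ j hij ih =>
    rw [W.tt_succ c (by omega)]
    linarith [htri (W.seq i) (W.seq j) (W.seq (j + 1))]

lemma tt_le_tt_of_strictMonoOn {K : ℕ} (W' : CWalk n K) (htri : ∀ u v w, c u w ≤ c u v + c v w)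
    {φ : ℕ → ℕ} {i j : ℕ} (hij : i ≤ j) (hφ : StrictMonoOn φ (Set.Icc i j))
    (hseq : ∀ x ∈ Set.Icc i j, W'.seq x = W.seq (φ x)) :
    W'.tt c i j ≤ W.tt c (φ i) (φ j) := by
  induction j, hij using Nat.le_induction with
  | base => simp [tt]
  | succ j hij ih =>
    have hsub : Set.Icc i j ⊆ Set.Icc i (j + 1) := Set.Icc_subset_Icc_right j.le_succ
    have hij' : φ i ≤ φ j := hφ.monotoneOn ⟨le_rfl, by omega⟩ ⟨hij, by omega⟩ hij
    have hlt : φ j < φ (j + 1) := hφ ⟨hij, by omega⟩ ⟨by omega, le_rfl⟩ (by omega)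
    rw [W'.tt_succ c hij, hseq j ⟨hij, by omega⟩, hseq (j + 1) ⟨by omega, le_rfl⟩,
      W.tt_add c hij' hlt.le]
    exact add_le_add (ih (hφ.mono hsub) fun x hx => hseq x (hsub hx)) (W.c_le_tt htri hlt)

end Basic

def ofFun {n K : ℕ} (f : ℕ → Fin n) (hK : 0 < K) (hstep : ∀ x, x + 1 < K → f x ≠ f (x + 1))
    (hwrap : f (K - 1) ≠ f 0) (hcov : ∀ e, ∃ x < K, f x = e) : CWalk n K where
  seq x := f (x % K)
  periodic x := by simp
  step x := by
    have hx := Nat.mod_lt x hK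
    obtain rfl | hK1 := eq_or_lt_of_le (Nat.succ_le_of_lt hK)
    · simp at hwrap
    rw [Nat.add_mod_eq_ite, Nat.mod_eq_of_lt hK1]
    split_ifs with h
    · rw [show x % K = K - 1 by omega, show K - 1 + 1 - K = 0 by omega]
      exact hwrap
    · exact hstep _ (by omega)
  covers e := by
    obtain ⟨x, hx, rfl⟩ := hcov e
    exact ⟨x, hx, by rw [Nat.mod_eq_of_lt hx]⟩

lemma ofFun_seq_of_lt {n K : ℕ} {f : ℕ → Fin n} {hK : 0 < K} {hstep hwrap hcov} {x : ℕ}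
    (hx : x < K) : (ofFun f hK hstep hwrap hcov).seq x = f x := by
  simp [ofFun, Nat.mod_eq_of_lt hx]

section Gaps

variable {n k : ℕ} (c : Fin n → Fin n → ℝ) (W : CWalk n k)

def IsGap (e : Fin n) (i j : ℕ) : Prop :=
  i < j ∧ W.seq i = e ∧ W.seq j = e ∧ ∀ t, i < t → t < j → W.seq t ≠ e

def gapTimes (e : Fin n) : Set ℝ := {T | ∃ i j, W.IsGap e i j ∧ T = W.tt c i j}

lemma RT_eq_sSup_gapTimes (e : Fin n) : W.RT c e = sSup (W.gapTimes c e) := by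
  simp only [RT, gapTimes, IsGap, and_assoc]

lemma R_eq_sSup_range : W.R c = sSup (Set.range (W.RT c)) := by
  simp only [R, Set.range, eq_comm]

lemma exists_isGap (i : ℕ) : ∃ j, W.IsGap (W.seq i) i j := by
  classical
  have hex : ∃ j, i < j ∧ W.seq j = W.seq i := ⟨i + k, by have := W.period_pos; omega, W.periodic i⟩
  obtain ⟨hij, hj⟩ := Nat.find_spec hex
  exact ⟨Nat.find hex, hij, rfl, hj, fun t ht₁ ht₂ ht => Nat.find_min hex ht₂ ⟨ht₁, ht⟩⟩

variable {W}

lemma isGap_add_mul_iff {e : Fin n} {i j : ℕ} (m : ℕ) :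
    W.IsGap e (i + m * k) (j + m * k) ↔ W.IsGap e i j := by
  simp only [IsGap, seq_add_mul, add_lt_add_iff_right]
  refine and_congr_right fun _ => and_congr_right fun _ => and_congr_right fun _ =>
    ⟨fun h t ht₁ ht₂ => ?_, fun h t ht₁ ht₂ => ?_⟩
  · rw [← W.seq_add_mul t m]
    exact h _ (by omega) (by omega)
  · obtain ⟨t, rfl⟩ : ∃ s, t = s + m * k := ⟨t - m * k, by omega⟩
    rw [seq_add_mul]
    exact h t (by omega) (by omega)

lemma IsGap.le_add_period {e : Fin n} {i j : ℕ} (h : W.IsGap e i j) : j ≤ i + k := by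
  by_contra hj
  exact h.2.2.2 (i + k) (by have := W.period_pos; omega) (by omega) (by rw [W.periodic, h.2.1])

lemma IsGap.exists_lt_period {e : Fin n} {i j : ℕ} (h : W.IsGap e i j) :
    ∃ i' j', i' < k ∧ W.IsGap e i' j' ∧ W.tt c i' j' = W.tt c i j := by
  set m := i / k
  have hi : i = i % k + m * k := (Nat.mod_add_div' i k).symm
  have hj : j = j - m * k + m * k := by have := h.1; omega
  refine ⟨i % k, j - m * k, Nat.mod_lt i W.period_pos, ?_, ?_⟩
  · rwa [← isGap_add_mul_iff m, ← hi, ← hj]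
  · rw [← W.tt_add_mul c _ _ m, ← hi, ← hj]

variable (W)

lemma finite_gapTimes (e : Fin n) : (W.gapTimes c e).Finite := by
  refine (((Set.finite_Iio k).prod (Set.finite_Iic (2 * k))).image
    fun p => W.tt c p.1 p.2).subset ?_
  rintro _ ⟨i, j, h, rfl⟩
  obtain ⟨i', j', hi', h', htt⟩ := h.exists_lt_period c
  exact ⟨(i', j'), ⟨hi', show j' ≤ 2 * k by have := h'.le_add_period; omega⟩, htt⟩

variable {W}

lemma IsGap.tt_le_R {e : Fin n} {i j : ℕ} (h : W.IsGap e i j) : W.tt c i j ≤ W.R c := by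
  have hRT : W.tt c i j ≤ W.RT c e := by
    rw [RT_eq_sSup_gapTimes]
    exact le_csSup (W.finite_gapTimes c e).bddAbove ⟨i, j, h, rfl⟩
  refine hRT.trans ?_
  rw [R_eq_sSup_range]
  exact le_csSup (Set.finite_range _).bddAbove ⟨e, rfl⟩

variable (W)

lemma exists_isGap_tt_eq_R : ∃ e i j, W.IsGap e i j ∧ W.tt c i j = W.R c := by
  obtain ⟨e, he⟩ : W.R c ∈ Set.range (W.RT c) := by
    rw [R_eq_sSup_range]
    exact (Set.range_nonempty_iff_nonempty.2 ⟨W.seq 0⟩).csSup_mem (Set.finite_range _)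
  have hne : (W.gapTimes c e).Nonempty := by
    obtain ⟨i, -, rfl⟩ := W.covers e
    obtain ⟨j, h⟩ := W.exists_isGap i
    exact ⟨_, i, j, h, rfl⟩
  obtain ⟨i, j, h, hT⟩ := hne.csSup_mem (W.finite_gapTimes c e)
  exact ⟨e, i, j, h, by rw [← hT, ← RT_eq_sSup_gapTimes, he]⟩

variable {c}

lemma R_nonneg (hc : ∀ u v, u ≠ v → 0 ≤ c u v) : 0 ≤ W.R c := by
  rw [R_eq_sSup_range]
  refine Real.sSup_nonneg ?_
  rintro _ ⟨e, rfl⟩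
  refine Real.sSup_nonneg ?_
  rintro _ ⟨i, j, -, -, -, -, rfl⟩
  exact W.tt_nonneg hc i j

lemma R_le_of_forall_isGap {B : ℝ} (hB : 0 ≤ B)
    (h : ∀ e i j, i < k → W.IsGap e i j → W.tt c i j ≤ B) : W.R c ≤ B := by
  refine Real.sSup_le ?_ hB
  rintro _ ⟨e, rfl⟩
  refine Real.sSup_le ?_ hB
  rintro _ ⟨i, j, h₁, h₂, h₃, h₄, rfl⟩
  obtain ⟨i', j', hi', hgap, htt⟩ := IsGap.exists_lt_period (W := W) c ⟨h₁, h₂, h₃, h₄⟩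
  exact htt ▸ h e i' j' hi' hgap

lemma tt_le_R_of_forall_ne (hc : ∀ u v, u ≠ v → 0 ≤ c u v) {x y : ℕ}
    (h : ∀ w, x < w → w < y → W.seq w ≠ W.seq x) : W.tt c x y ≤ W.R c := by
  obtain ⟨j, hj⟩ := W.exists_isGap x
  have hyj : y ≤ j := by
    by_contra
    exact h j hj.1 (by omega) hj.2.2.1
  exact (W.tt_mono hc le_rfl hyj).trans (hj.tt_le_R c)

lemma IsGap.exists_visit_of_tt_eq_R (hc : ∀ u v, u ≠ v → 0 < c u v) {d : Fin n} {P Q : ℕ}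
    (hP : k ≤ P) (hgap : W.IsGap d P Q) (hR : W.tt c P Q = W.R c) (e : Fin n) :
    ∃ w, P < w ∧ w ≤ Q ∧ W.seq w = e := by
  by_contra! hnone
  obtain ⟨w, hw₁, hw₂, hwe⟩ := W.exists_visit_mem_Ico (P - k) e
  set i := Nat.findGreatest (fun t => W.seq t = e) P
  have hie : W.seq i = e :=
    Nat.findGreatest_spec (P := fun t => W.seq t = e) (by omega : w ≤ P) hwe
  have hiP : i < P := lt_of_le_of_ne (Nat.findGreatest_le P) fun h =>
    hnone Q hgap.1 le_rfl (by rw [hgap.2.2.1, ← hgap.2.1, ← h, hie])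
  have hfree : ∀ t, i < t → t < Q → W.seq t ≠ W.seq i := by
    intro t ht₁ ht₂
    rw [hie]
    rcases le_or_gt t P with htP | hPt
    · exact Nat.findGreatest_is_greatest ht₁ htP
    · exact hnone t hPt ht₂.le
  have hle := W.tt_le_R_of_forall_ne (fun u v h => (hc u v h).le) hfree
  rw [W.tt_add c hiP.le hgap.1.le, hR] at hle
  linarith [W.tt_pos hc hiP]

lemma exists_binding_gap (hc : ∀ u v, u ≠ v → 0 < c u v) :
    ∃ P Q, P < Q ∧ Q ≤ P + k ∧ W.seq P = W.seq Q ∧ W.tt c P Q = W.R c ∧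
      ∀ e, ∃ w, P < w ∧ w ≤ Q ∧ W.seq w = e := by
  obtain ⟨d, i, j, h, hR⟩ := W.exists_isGap_tt_eq_R c
  have h' : W.IsGap d (i + 1 * k) (j + 1 * k) := (isGap_add_mul_iff 1).2 h
  have hR' : W.tt c (i + 1 * k) (j + 1 * k) = W.R c := by rw [W.tt_add_mul, hR]
  exact ⟨_, _, h'.1, h'.le_add_period, h'.2.1.trans h'.2.2.1.symm, hR',
    h'.exists_visit_of_tt_eq_R W hc (by omega) hR'⟩

end Gaps

section Shortcut

variable {n k : ℕ} (W : CWalk n k) {P Q : ℕ}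

def lastVisits (P Q : ℕ) : Finset ℕ :=
  {x ∈ Finset.Ioc P Q | ∀ w ∈ Finset.Ioc x Q, W.seq w ≠ W.seq x}

lemma mem_lastVisits {x : ℕ} :
    x ∈ W.lastVisits P Q ↔ (P < x ∧ x ≤ Q) ∧ ∀ w, x < w → w ≤ Q → W.seq w ≠ W.seq x := by
  simp [lastVisits]

lemma exists_mem_lastVisits (hbind : ∀ e, ∃ w, P < w ∧ w ≤ Q ∧ W.seq w = e) (e : Fin n) :
    ∃ x ∈ W.lastVisits P Q, W.seq x = e := by
  obtain ⟨w, hPw, hwQ, hwe⟩ := hbind e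
  have hlast := Nat.findGreatest_spec (P := fun t => W.seq t = e) hwQ hwe
  refine ⟨_, (W.mem_lastVisits).2 ⟨⟨hPw.trans_le (Nat.le_findGreatest hwQ hwe),
    Nat.findGreatest_le Q⟩, fun t ht₁ ht₂ => ?_⟩, hlast⟩
  rw [hlast]
  exact Nat.findGreatest_is_greatest ht₁ ht₂

lemma card_lastVisits (hbind : ∀ e, ∃ w, P < w ∧ w ≤ Q ∧ W.seq w = e) :
    (W.lastVisits P Q).card = n := by
  classical
  have hinj : Set.InjOn W.seq (W.lastVisits P Q) := by
    intro x hx y hy hxy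
    rw [Finset.mem_coe, mem_lastVisits] at hx hy
    by_contra hne
    rcases lt_or_gt_of_ne hne with h | h
    · exact hx.2 y h hy.1.2 hxy.symm
    · exact hy.2 x h hx.1.2 hxy
  have himage : (W.lastVisits P Q).image W.seq = Finset.univ :=
    Finset.eq_univ_of_forall fun e => by
      obtain ⟨x, hx, rfl⟩ := W.exists_mem_lastVisits hbind e
      exact Finset.mem_image_of_mem _ hx
  rw [← Finset.card_image_of_injOn hinj, himage, Finset.card_univ, Fintype.card_fin]

/-- `φ` lists, increasingly, the last visits in `(P, Q]` (positions `a < n`), followed by the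
visits `Q + 1, Q + 2, …` of `W`: the positions of `W` read by one period of the new walk. -/
structure IsShortcutMap (φ : ℕ → ℕ) (P Q : ℕ) : Prop where
  strictMono : StrictMono φ
  map_add : ∀ r, φ (n + r) = Q + 1 + r
  lt_map_zero : P < φ 0
  lastVisit : ∀ a < n, ∀ w, φ a < w → w ≤ Q → W.seq w ≠ W.seq (φ a)
  surj : ∀ e, ∃ a < n, W.seq (φ a) = e

lemma exists_isShortcutMap (hbind : ∀ e, ∃ w, P < w ∧ w ≤ Q ∧ W.seq w = e) :
    ∃ φ, W.IsShortcutMap φ P Q := by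
  have hs := W.card_lastVisits hbind
  set t := (W.lastVisits P Q).orderEmbOfFin hs
  have ht : ∀ a, (P < t a ∧ t a ≤ Q) ∧ ∀ w, t a < w → w ≤ Q → W.seq w ≠ W.seq (t a) :=
    fun a => (W.mem_lastVisits).1 (Finset.orderEmbOfFin_mem _ hs a)
  refine ⟨fun x => if h : x < n then t ⟨x, h⟩ else Q + 1 + (x - n),
    ⟨strictMono_nat_of_lt_succ fun x => ?_, fun r => ?_, ?_, fun a ha w => ?_, fun e => ?_⟩⟩
  · split_ifs with h₁ h₂ h₂
    · exact t.strictMono (Fin.mk_lt_mk.2 x.lt_succ_self)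
    · have := (ht ⟨x, h₁⟩).1.2
      omega
    · omega
    · omega
  · simp
  · simp only [dif_pos (W.seq 0).pos]
    exact (ht _).1.1
  · simp only [dif_pos ha]
    exact (ht _).2 w
  · obtain ⟨x, hx, rfl⟩ := W.exists_mem_lastVisits hbind e
    obtain ⟨a, rfl⟩ : x ∈ Set.range t := by rwa [Finset.range_orderEmbOfFin]
    exact ⟨a, a.2, by simp⟩

end Shortcut

namespace IsShortcutMap

variable {n k : ℕ} {c : Fin n → Fin n → ℝ} {W : CWalk n k} {φ : ℕ → ℕ} {P Q : ℕ}
  {W' : CWalk n (k + n)}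

lemma map_le (hφ : W.IsShortcutMap φ P Q) {a : ℕ} (ha : a < n) : φ a ≤ Q := by
  have := hφ.strictMono (show a < n + 0 by omega)
  rw [hφ.map_add] at this
  omega

lemma lt_map (hφ : W.IsShortcutMap φ P Q) {a : ℕ} : P < φ a :=
  hφ.lt_map_zero.trans_le (hφ.strictMono.monotone a.zero_le)

lemma map_pred (hφ : W.IsShortcutMap φ P Q) : φ (n - 1) = Q := by
  obtain ⟨a, ha, hae⟩ := hφ.surj (W.seq Q)
  have haQ : φ a = Q := by
    by_contra hne
    exact hφ.lastVisit a ha Q (lt_of_le_of_ne (hφ.map_le ha) hne) le_rfl hae.symm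
  have := hφ.strictMono.monotone (show a ≤ n - 1 by omega)
  have := hφ.map_le (show n - 1 < n by omega)
  omega

lemma exists_walk_seq_eq (hφ : W.IsShortcutMap φ P Q) (hn : 2 ≤ n) :
    ∃ W' : CWalk n (k + n), ∀ x < k + n, W'.seq x = W.seq (φ x) := by
  have hk := W.period_pos
  have hstep : ∀ x, x + 1 < k + n → W.seq (φ x) ≠ W.seq (φ (x + 1)) := by
    intro x hx
    rcases lt_or_ge (x + 1) n with hxn | hxn
    · exact (hφ.lastVisit x (by omega) _ (hφ.strictMono x.lt_add_one) (hφ.map_le hxn)).symm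
    · obtain ⟨r, rfl⟩ : ∃ r, x = n - 1 + r := ⟨x - (n - 1), by omega⟩
      have h₁ : φ (n - 1 + r) = Q + r := by
        rcases r with _ | r
        · exact hφ.map_pred
        · rw [show n - 1 + (r + 1) = n + r by omega, hφ.map_add]
          omega
      rw [h₁, show n - 1 + r + 1 = n + r by omega, hφ.map_add, add_right_comm]
      exact W.step _
  have hwrap : W.seq (φ (k + n - 1)) ≠ W.seq (φ 0) := by
    rw [show k + n - 1 = n + (k - 1) by omega, hφ.map_add, show Q + 1 + (k - 1) = Q + k by omega,
      W.periodic, ← hφ.map_pred]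
    have h₀ : φ 0 < φ (n - 1) := hφ.strictMono (by omega)
    exact hφ.lastVisit 0 (by omega) _ h₀ (hφ.map_le (by omega))
  have hcov : ∀ e, ∃ x < k + n, W.seq (φ x) = e := by
    intro e
    obtain ⟨w, hw₁, hw₂, hwe⟩ := W.exists_visit_mem_Ico (Q + 1) e
    exact ⟨n + (w - (Q + 1)), by omega, by rw [hφ.map_add, ← hwe]; congr 1; omega⟩
  exact ⟨ofFun (W.seq ∘ φ) (by omega) hstep hwrap hcov, fun x hx => ofFun_seq_of_lt hx⟩

/-- A gap of `W'` inside one period reads, through `φ`, a stretch of `W` without the target. -/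
lemma tt_le_R_of_isGap_of_lt (hφ : W.IsShortcutMap φ P Q)
    (hW' : ∀ x < k + n, W'.seq x = W.seq (φ x))
    (hc : ∀ u v, u ≠ v → 0 ≤ c u v) (htri : ∀ u v w, c u w ≤ c u v + c v w)
    {e : Fin n} {i j : ℕ} (hgap : W'.IsGap e i j) (hj : j < k + n) : W'.tt c i j ≤ W.R c := by
  have hseq : ∀ x ∈ Set.Icc i j, W'.seq x = W.seq (φ x) :=
    fun x hx => hW' x (by have := hx.2; omega)
  have hie : W.seq (φ i) = e := (hseq i ⟨le_rfl, hgap.1.le⟩).symm.trans hgap.2.1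
  refine (W.tt_le_tt_of_strictMonoOn W' htri hgap.1.le (hφ.strictMono.strictMonoOn _) hseq).trans
    (W.tt_le_R_of_forall_ne hc fun w h₁ h₂ hw => ?_)
  rcases le_or_gt w Q with hwQ | hQw
  · have hi : i < n := by
      by_contra! hi
      have := hφ.strictMono.monotone hi
      have := hφ.map_add 0
      simp only [add_zero] at this
      omega
    exact hφ.lastVisit i hi w h₁ hwQ hw
  · have hx : φ (n + (w - Q - 1)) = w := by rw [hφ.map_add]; omega
    have hxi : i < n + (w - Q - 1) := hφ.strictMono.lt_iff_lt.1 (by rwa [hx])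
    have hxj : n + (w - Q - 1) < j := hφ.strictMono.lt_iff_lt.1 (by rwa [hx])
    exact hgap.2.2.2 _ hxi hxj (by rw [hW' _ (by omega), hx, hw, hie])

/-- A gap of `W'` that leaves the period runs from the last visit to `e` before the inserted block
to its visit in the block; the block is a shortcut of the binding gap `(P, Q)`. -/
lemma tt_le_tt_of_isGap_of_le (hφ : W.IsShortcutMap φ P Q)
    (hW' : ∀ x < k + n, W'.seq x = W.seq (φ x))
    (hc : ∀ u v, u ≠ v → 0 ≤ c u v) (htri : ∀ u v w, c u w ≤ c u v + c v w)
    (hPQ : W.seq P = W.seq Q) (hQP : Q ≤ P + k)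
    {e : Fin n} {i j : ℕ} (hgap : W'.IsGap e i j) (hi : i < k + n) (hj : k + n ≤ j) :
    W'.tt c i j ≤ W.tt c P Q := by
  have hk := W.period_pos
  obtain ⟨a, ha, hae⟩ := hφ.surj e
  have haQ := hφ.map_le ha
  have hPa : P < φ a := hφ.lt_map
  -- the visit to `e` at `φ a + k`, read by `W'` after the block
  set x := n + (φ a + k - Q - 1)
  have hφx : φ x = φ a + k := by rw [hφ.map_add]; omega
  have hxi : x ≤ i := by
    by_contra! hix
    exact hgap.2.2.2 x hix (by omega) (by rw [hW' x (by omega), hφx, W.periodic, hae])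
  have hja : j ≤ a + (k + n) := by
    by_contra! hja
    exact hgap.2.2.2 _ (by omega) hja (by rw [W'.periodic, hW' a (by omega), hae])
  have hφlast : φ (k + n - 1) = Q + k := by
    rw [show k + n - 1 = n + (k - 1) by omega, hφ.map_add]
    omega
  have hlast : W'.seq (k + n - 1) = W.seq P := by
    rw [hW' _ (by omega), hφlast, W.periodic, hPQ]
  have hstep : W'.tt c (k + n - 1) (0 + (k + n)) ≤ W.tt c P (φ 0) := by
    have h := W'.tt_succ c (le_refl (k + n - 1))
    rw [W'.tt_self, zero_add, show k + n - 1 + 1 = 0 + (k + n) by omega, W'.periodic, hlast,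
      hW' 0 (by omega)] at h
    exact h ▸ W.c_le_tt htri hφ.lt_map
  have hblock : W'.tt c 0 a ≤ W.tt c (φ 0) (φ a) :=
    W.tt_le_tt_of_strictMonoOn W' htri a.zero_le (hφ.strictMono.strictMonoOn _)
      fun y hy => hW' y (by have := hy.2; omega)
  have hhead : W'.tt c i (k + n - 1) ≤ W.tt c (φ a) Q := by
    have h := W.tt_le_tt_of_strictMonoOn W' htri (by omega : i ≤ k + n - 1)
      (hφ.strictMono.strictMonoOn _) fun y hy => hW' y (by have := hy.2; omega)
    rw [hφlast] at h
    refine h.trans ?_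
    rw [← W.tt_add_period c (φ a) Q]
    exact W.tt_mono hc (hφx ▸ hφ.strictMono.monotone hxi) le_rfl
  calc W'.tt c i j ≤ W'.tt c i (a + (k + n)) := W'.tt_mono hc le_rfl hja
    _ = W'.tt c (k + n - 1) (0 + (k + n)) + W'.tt c 0 a + W'.tt c i (k + n - 1) := by
      rw [W'.tt_add c (by omega : i ≤ k + n - 1) (by omega : k + n - 1 ≤ a + (k + n)),
        W'.tt_add c (by omega : k + n - 1 ≤ 0 + (k + n)) (by omega : 0 + (k + n) ≤ a + (k + n)),
        W'.tt_add_period]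
      ring
    _ ≤ W.tt c P (φ 0) + W.tt c (φ 0) (φ a) + W.tt c (φ a) Q := by gcongr
    _ = W.tt c P Q := by
      rw [← W.tt_add c hφ.lt_map.le (hφ.strictMono.monotone a.zero_le), ← W.tt_add c hPa.le haQ]

lemma R_le (hφ : W.IsShortcutMap φ P Q) (hW' : ∀ x < k + n, W'.seq x = W.seq (φ x))
    (hc : ∀ u v, u ≠ v → 0 ≤ c u v) (htri : ∀ u v w, c u w ≤ c u v + c v w)
    (hPQ : W.seq P = W.seq Q) (hQP : Q ≤ P + k) (hR : W.tt c P Q = W.R c) :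
    W'.R c ≤ W.R c := by
  refine W'.R_le_of_forall_isGap (W.R_nonneg hc) fun e i j hi hgap => ?_
  rcases lt_or_ge j (k + n) with hj | hj
  · exact hφ.tt_le_R_of_isGap_of_lt hW' hc htri hgap hj
  · exact hR ▸ hφ.tt_le_tt_of_isGap_of_le hW' hc htri hPQ hQP hgap hi hj

end IsShortcutMap

variable {n k : ℕ}

lemma exists_walk_add_R_le {c : Fin n → Fin n → ℝ} (W : CWalk n k)
    (hc : ∀ u v, u ≠ v → 0 < c u v) (htri : ∀ u v w, c u w ≤ c u v + c v w) (hn : 2 ≤ n) :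
    ∃ W' : CWalk n (k + n), W'.R c ≤ W.R c := by
  obtain ⟨P, Q, -, hQP, hPQ, hR, hbind⟩ := W.exists_binding_gap hc
  obtain ⟨φ, hφ⟩ := W.exists_isShortcutMap hbind
  obtain ⟨W', hW'⟩ := hφ.exists_walk_seq_eq hn
  exact ⟨W', hφ.R_le hW' (fun u v h => (hc u v h).le) htri hPQ hQP hR⟩

lemma nonempty_of_three_le (hn : 3 ≤ n) (hnk : n ≤ k) : Nonempty (CWalk n k) := by
  let f : ℕ → Fin n := fun x => ⟨if x < n then x else 1 + (x - n) % 2, by split_ifs <;> omega⟩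
  refine ⟨ofFun f (by omega) (fun x _ => ?_) ?_ fun e => ⟨e, by omega, ?_⟩⟩
  all_goals simp only [f, ne_eq, Fin.ext_iff]
  · split_ifs <;> omega
  · split_ifs <;> omega
  · simp

/-- On two targets a walk alternates, so its period can be shortened by two. -/
def ofAddTwo (W : CWalk 2 (k + 2)) (hk : 2 ≤ k) : CWalk 2 k where
  seq := W.seq
  periodic i := by
    have h₂ : W.seq (i + k + 2) = W.seq (i + k) := by
      have := W.step (i + k)
      have : W.seq (i + k + 1) ≠ W.seq (i + k + 2) := W.step (i + k + 1)
      omega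
    rw [← h₂, add_assoc, W.periodic]
  step := W.step
  covers e := by
    have := W.step 0
    rw [zero_add] at this
    by_cases h : W.seq 0 = e
    · exact ⟨0, by omega, h⟩
    · exact ⟨1, by omega, by omega⟩

end CWalk

lemma Rstar_eq_zero_of_isEmpty {n k : ℕ} (c : Fin n → Fin n → ℝ) [IsEmpty (CWalk n k)] :
    Rstar n c k = 0 := by
  simp [Rstar]

lemma Rstar_le_R {n k : ℕ} {c : Fin n → Fin n → ℝ} (hc : ∀ u v, u ≠ v → 0 ≤ c u v)
    (W : CWalk n k) : Rstar n c k ≤ W.R c :=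
  csInf_le ⟨0, by rintro _ ⟨V, rfl⟩; exact V.R_nonneg hc⟩ ⟨W, rfl⟩

/-- for every `k ≥ n`, `R*(k + n) ≤ R*(k)`. -/
theorem Rstar_add_n_le
    (n : ℕ) (hn : 2 ≤ n)
    (c : Fin n → Fin n → ℝ)
    (hc : ∀ u v : Fin n, u ≠ v → 0 < c u v)
    (htri : ∀ u v w : Fin n, c u w ≤ c u v + c v w) :
    ∀ k, n ≤ k → Rstar n c (k + n) ≤ Rstar n c k := by
  intro k hnk
  rcases isEmpty_or_nonempty (CWalk n k) with hempty | ⟨⟨W₀⟩⟩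
  · obtain rfl : n = 2 := by
      by_contra hn2
      exact hempty.false (CWalk.nonempty_of_three_le (by omega) hnk).some
    have : IsEmpty (CWalk 2 (k + 2)) := ⟨fun W => hempty.false (W.ofAddTwo hnk)⟩
    rw [Rstar_eq_zero_of_isEmpty, Rstar_eq_zero_of_isEmpty]
  · refine le_csInf ⟨_, W₀, rfl⟩ ?_
    rintro _ ⟨W, rfl⟩
    obtain ⟨W', hW'⟩ := W.exists_walk_add_R_le hc htri hn
    exact (Rstar_le_R (fun u v h => (hc u v h).le) W').trans hW'
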